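/- Let n ≥ 5 be odd, m = (2^n+1)/3, and let k ∈ ℕ with k < m. Set x = 7m + 8k (the element (1,2,k) of H). Then D(x) = min{ ν(y) : y ∈ H, y ≥ x } equals: 6 if k = 0; 8 if 1 ≤ k ≤ ⌊m/4⌋; 8(⌈k − m/4⌉ + 1) if ⌈m/4⌉ ≤ k ≤ ⌊m/2⌋ − 2; 2(⌈k + m/2⌉ + 1) + 6(⌈k + m/2⌉ − m + 1) if ⌊m/2⌋ − 1 ≤ k ≤ ⌊3m/4⌋ − 2; 4(⌈k + m/4⌉ + 1) + 4(⌈k + m/4⌉ − m + 1) if ⌊3m/4⌋ − 1 ≤ k ≤ m−2; and 6m if k = m−1. -/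

import Mathlib

/-!
`H = ⟨8, 2m, 3m⟩` with `m ≡ 3 (mod 8)`. Its Apéry set with respect to `8` is
`{0, 2, 3, 4, 5, 6, 7, 9} · m`, one element per residue class, so `y ∈ H` iff `y` is at least
the Apéry element of its class. Counting the `a ∈ H` with `y - a ∈ H` class by class writes
`ν y` as a sum of eight floor terms. With `m = 8q + 3`, the minimum of `ν` over `y ≥ 7m + 8k`
is then a piecewise linear problem, solved by splitting on `y mod 8`; it is attained at
`7m + 8k`, `9m`, or `7m + 8k + 2`, `+ 4`, `+ 6`.
-/

open Finset

noncomputable def sumPairCount (S : Set ℕ) (y : ℕ) : ℕ :=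
  {p : ℕ × ℕ | p.1 ∈ S ∧ p.2 ∈ S ∧ p.1 + p.2 = y}.ncard

lemma Nat.sub_mod_eq_mod_add_sub_mod {a y : ℕ} (g : ℕ) (h : a ≤ y) :
    (y - a) % g = (y % g + g - a % g) % g := by
  have hle : a % g ≤ y % g + g := by
    rcases g.eq_zero_or_pos with rfl | hg
    · simpa using h
    · exact (Nat.mod_lt a hg).le.trans (Nat.le_add_left _ _)
  refine Nat.ModEq.add_right_cancel' (a % g) ?_
  calc y - a + a % g ≡ y - a + a [MOD g] := Nat.ModEq.add_left _ (Nat.mod_modEq a g)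
    _ = y := Nat.sub_add_cancel h
    _ ≡ y % g + g [MOD g] := (Nat.mod_modEq y g).symm.trans Nat.add_modEq_right.symm
    _ = y % g + g - a % g + a % g := by omega

lemma Nat.lt_add_sub_div_iff {g c y t : ℕ} (hg : 0 < g) : t < (y + g - c) / g ↔ c + g * t ≤ y := by
  rw [← Nat.add_one_le_iff, Nat.le_div_iff_mul_le hg, add_mul, one_mul, mul_comm]
  omega

section AperyCount

variable {S : Set ℕ} {g : ℕ} {w : ℕ → ℕ}

open Classical in
lemma filter_mod_eq_eq_image_add_mul (hg : 0 < g) (hw : ∀ r < g, w r % g = r)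
    (hS : ∀ y, y ∈ S ↔ w (y % g) ≤ y) (y : ℕ) {r : ℕ} (hr : r < g) :
    {a ∈ {a ∈ range (y + 1) | a ∈ S ∧ y - a ∈ S} | a % g = r} =
      (range ((y + g - (w r + w ((y % g + g - r) % g))) / g)).image (fun t => w r + g * t) := by
  ext a
  simp only [mem_filter, mem_range, mem_image, Nat.lt_add_sub_div_iff hg, hS]
  constructor
  · rintro ⟨⟨hay, haS, hbS⟩, rfl⟩
    rw [Nat.sub_mod_eq_mod_add_sub_mod g (by omega)] at hbS
    have hdvd : g ∣ a - w (a % g) := (Nat.modEq_iff_dvd' haS).1 (hw _ hr)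
    have hmul := Nat.mul_div_cancel' hdvd
    exact ⟨(a - w (a % g)) / g, by omega, by omega⟩
  · rintro ⟨t, ht, rfl⟩
    have hmod : (w r + g * t) % g = r := by rw [Nat.add_mul_mod_self_left, hw r hr]
    refine ⟨⟨by omega, by rw [hmod]; omega, ?_⟩, hmod⟩
    rw [Nat.sub_mod_eq_mod_add_sub_mod g (by omega), hmod]
    omega

open Classical in
theorem sumPairCount_eq_sum (hg : 0 < g) (hw : ∀ r < g, w r % g = r)
    (hS : ∀ y, y ∈ S ↔ w (y % g) ≤ y) (y : ℕ) :
    sumPairCount S y = ∑ r ∈ range g, (y + g - (w r + w ((y % g + g - r) % g))) / g := by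
  have hpairs : {p : ℕ × ℕ | p.1 ∈ S ∧ p.2 ∈ S ∧ p.1 + p.2 = y} =
      ({a ∈ range (y + 1) | a ∈ S ∧ y - a ∈ S}.image fun a => (a, y - a) : Set (ℕ × ℕ)) := by
    ext ⟨a, b⟩
    simp only [Set.mem_ofPred_eq, coe_image, coe_filter, mem_range, Set.mem_image,
      Prod.mk.injEq]
    constructor
    · rintro ⟨ha, hb, rfl⟩
      exact ⟨a, ⟨by omega, ha, by rwa [Nat.add_sub_cancel_left]⟩, rfl, by omega⟩
    · rintro ⟨a, ⟨hay, ha, hb⟩, rfl, rfl⟩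
      exact ⟨ha, hb, by omega⟩
  rw [sumPairCount, hpairs, Set.ncard_coe_finset,
    card_image_of_injective _ fun a b h => (Prod.ext_iff.1 h).1,
    card_eq_sum_card_fiberwise (f := (· % g)) (t := range g)
      fun a _ => mem_range.2 (Nat.mod_lt a hg)]
  refine sum_congr rfl fun r hr => ?_
  rw [filter_mod_eq_eq_image_add_mul hg hw hS y (mem_range.1 hr),
    card_image_of_injective _ fun s t h => by simpa [hg.ne'] using h, card_range]

end AperyCount

/-- `⟨8, 2m, 3m⟩`: the `H` of the statement, with `2 ^ n + 1 = 3 * m`. -/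
def ggsSemigroup (m : ℕ) : Set ℕ :=
  {x | ∃ i ≤ 1, ∃ j ≤ 3, ∃ k : ℕ, x = i * (3 * m) + 2 * j * m + 8 * k}

/-- `aperyCoeff r * m` is the least element of `ggsSemigroup m` congruent to `r` mod `8`. -/
def aperyCoeff : ℕ → ℕ
  | 0 => 0 | 1 => 3 | 2 => 6 | 3 => 9 | 4 => 4 | 5 => 7 | 6 => 2 | _ => 5

lemma aperyCoeff_mul_mod {m : ℕ} (hm : m % 8 = 3) {r : ℕ} (hr : r < 8) :
    aperyCoeff r * m % 8 = r := by
  interval_cases r <;> simp only [aperyCoeff] <;> omega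

lemma mem_ggsSemigroup_iff {m : ℕ} (hm : m % 8 = 3) (y : ℕ) :
    y ∈ ggsSemigroup m ↔ aperyCoeff (y % 8) * m ≤ y := by
  constructor
  · rintro ⟨i, hi, j, hj, t, rfl⟩
    interval_cases i <;> interval_cases j <;>
      simp only [aperyCoeff, zero_mul, one_mul, mul_zero, mul_one, zero_add, add_zero, Nat.add_mod,
        Nat.mul_mod, Nat.reduceMod, hm, Nat.reduceMul, Nat.reduceAdd,
        Nat.one_mod] <;>
      omega
  · intro hy
    obtain ⟨r, hr, hyr⟩ : ∃ r < 8, y % 8 = r := ⟨y % 8, Nat.mod_lt y (by norm_num), rfl⟩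
    rw [hyr] at hy
    -- `aperyCoeff r = 3 * i + 2 * j` with `i = aperyCoeff r % 2`
    refine ⟨aperyCoeff r % 2, ?_, aperyCoeff r / 2 - aperyCoeff r % 2, ?_,
      (y - aperyCoeff r * m) / 8, ?_⟩ <;>
    interval_cases r <;> norm_num [aperyCoeff] at hy ⊢ <;> omega

lemma sumPairCount_ggsSemigroup {m : ℕ} (hm : m % 8 = 3) (y : ℕ) :
    sumPairCount (ggsSemigroup m) y =
      ∑ r ∈ range 8, (y + 8 - (aperyCoeff r * m + aperyCoeff ((y % 8 + 8 - r) % 8) * m)) / 8 :=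
  sumPairCount_eq_sum (by norm_num) (fun _ hr => aperyCoeff_mul_mod hm hr)
    (mem_ggsSemigroup_iff hm) y

/-- The six cases of the theorem, for `m = 8 * q + 3`. -/
def fengRaoValue (q k : ℕ) : ℕ :=
  if k = 0 then 6
  else if k ≤ 2 * q then 8
  else if k < 4 * q then 8 * (k - 2 * q + 1)
  else if k ≤ 6 * q then 8 * (k - 2 * q) + 6
  else if k ≤ 8 * q + 1 then 8 * (k - 2 * q) + 4
  else 6 * (k + 1)

lemma fengRaoValue_le_sumPairCount {q k y : ℕ} (hk : k < 8 * q + 3)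
    (hy : y ∈ ggsSemigroup (8 * q + 3)) (hxy : 7 * (8 * q + 3) + 8 * k ≤ y) :
    fengRaoValue q k ≤ sumPairCount (ggsSemigroup (8 * q + 3)) y := by
  have hm : (8 * q + 3) % 8 = 3 := by omega
  rw [mem_ggsSemigroup_iff hm] at hy
  rw [sumPairCount_ggsSemigroup hm]
  obtain ⟨r, hr, hyr⟩ : ∃ r < 8, y % 8 = r := ⟨y % 8, Nat.mod_lt y (by norm_num), rfl⟩
  rw [hyr] at hy ⊢
  simp only [sum_range_succ, sum_range_zero]
  unfold fengRaoValue
  interval_cases r <;> simp only [aperyCoeff, ← add_mul] at hy ⊢ <;> norm_num at hy ⊢ <;>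
    split_ifs <;> omega

lemma exists_sumPairCount_eq_fengRaoValue {q k : ℕ} (hk : k < 8 * q + 3) :
    ∃ y ∈ ggsSemigroup (8 * q + 3), 7 * (8 * q + 3) + 8 * k ≤ y ∧
      sumPairCount (ggsSemigroup (8 * q + 3)) y = fengRaoValue q k := by
  have hm : (8 * q + 3) % 8 = 3 := by omega
  have attain : ∀ y r, y % 8 = r → 7 * (8 * q + 3) + 8 * k ≤ y →
      aperyCoeff r * (8 * q + 3) ≤ y → ∀ N, ∑ i ∈ range 8, (y + 8 -
        (aperyCoeff i * (8 * q + 3) + aperyCoeff ((r + 8 - i) % 8) * (8 * q + 3))) / 8 = N →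
      ∃ y ∈ ggsSemigroup (8 * q + 3), 7 * (8 * q + 3) + 8 * k ≤ y ∧
        sumPairCount (ggsSemigroup (8 * q + 3)) y = N := by
    rintro y r rfl hxy hy N rfl
    exact ⟨y, (mem_ggsSemigroup_iff hm y).2 hy, hxy, sumPairCount_ggsSemigroup hm y⟩
  unfold fengRaoValue
  split_ifs <;>
  [refine attain (7 * (8 * q + 3) + 8 * k) 5 (by omega) le_rfl ?_ _ ?_;
   refine attain (9 * (8 * q + 3)) 3 (by omega) (by omega) ?_ _ ?_;
   refine attain (7 * (8 * q + 3) + 8 * k + 6) 3 (by omega) (by omega) ?_ _ ?_;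
   refine attain (7 * (8 * q + 3) + 8 * k + 4) 1 (by omega) (by omega) ?_ _ ?_;
   refine attain (7 * (8 * q + 3) + 8 * k + 2) 7 (by omega) (by omega) ?_ _ ?_;
   refine attain (7 * (8 * q + 3) + 8 * k) 5 (by omega) le_rfl ?_ _ ?_] <;>
  simp only [sum_range_succ, sum_range_zero, aperyCoeff, ← add_mul] <;> norm_num <;> omega

lemma isLeast_fengRaoValue {q k : ℕ} (hk : k < 8 * q + 3) :
    IsLeast (sumPairCount (ggsSemigroup (8 * q + 3)) ''
      {y | y ∈ ggsSemigroup (8 * q + 3) ∧ 7 * (8 * q + 3) + 8 * k ≤ y}) (fengRaoValue q k) := by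
  obtain ⟨y, hy, hxy, hcount⟩ := exists_sumPairCount_eq_fengRaoValue hk
  refine ⟨⟨y, ⟨hy, hxy⟩, hcount⟩, ?_⟩
  rintro _ ⟨y, ⟨hy, hxy⟩, rfl⟩
  exact fengRaoValue_le_sumPairCount hk hy hxy

theorem stmt_6_general (n m : ℕ) (hn : 5 ≤ n) (hm : 3 * m = 2 ^ n + 1)
    (H : Set ℕ)
    (hH : H = {x | ∃ i ≤ 1, ∃ j ≤ 3, ∃ k : ℕ, x = i * (2 ^ n + 1) + 2 * j * m + 8 * k})
    (ν : ℕ → ℕ)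
    (hν : ∀ x, ν x = {p : ℕ × ℕ | p.1 ∈ H ∧ p.2 ∈ H ∧ p.1 + p.2 = x}.ncard)
    (D : ℕ → ℕ)
    (hD : ∀ x, D x = sInf (ν '' {y : ℕ | y ∈ H ∧ x ≤ y}))
    (k : ℕ) (hk : k < m) :
    (k = 0 → D (7 * m + 8 * k) = 6) ∧
    (1 ≤ k ∧ k ≤ m / 4 → D (7 * m + 8 * k) = 8) ∧
    (⌈(m : ℚ) / 4⌉ ≤ (k : ℤ) ∧ k ≤ m / 2 - 2 →
      (D (7 * m + 8 * k) : ℤ) = 8 * (⌈(k : ℚ) - m / 4⌉ + 1)) ∧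
    (m / 2 - 1 ≤ k ∧ k ≤ 3 * m / 4 - 2 →
      (D (7 * m + 8 * k) : ℤ)
        = 2 * (⌈(k : ℚ) + m / 2⌉ + 1) + 6 * (⌈(k : ℚ) + m / 2⌉ - m + 1)) ∧
    (3 * m / 4 - 1 ≤ k ∧ k ≤ m - 2 →
      (D (7 * m + 8 * k) : ℤ)
        = 4 * (⌈(k : ℚ) + m / 4⌉ + 1) + 4 * (⌈(k : ℚ) + m / 4⌉ - m + 1)) ∧
    (k = m - 1 → D (7 * m + 8 * k) = 6 * m) := by
  have h8 : 2 ^ 3 ∣ 2 ^ n := pow_dvd_pow 2 (by omega)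
  obtain ⟨q, rfl⟩ : ∃ q, m = 8 * q + 3 := ⟨m / 8, by omega⟩
  have hHq : H = ggsSemigroup (8 * q + 3) := by rw [hH, ← hm]; rfl
  have hDx : D (7 * (8 * q + 3) + 8 * k) = fengRaoValue q k := by
    rw [hD, funext hν, hHq]
    exact (isLeast_fengRaoValue hk).csInf_eq
  have hc₁ : ⌈((8 * q + 3 : ℕ) : ℚ) / 4⌉ = 2 * q + 1 := by
    rw [Int.ceil_eq_iff]; push_cast; constructor <;> linarith
  have hc₂ : ⌈(k : ℚ) - (8 * q + 3 : ℕ) / 4⌉ = k - 2 * q := by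
    rw [Int.ceil_eq_iff]; push_cast; constructor <;> linarith
  have hc₃ : ⌈(k : ℚ) + (8 * q + 3 : ℕ) / 2⌉ = k + 4 * q + 2 := by
    rw [Int.ceil_eq_iff]; push_cast; constructor <;> linarith
  have hc₄ : ⌈(k : ℚ) + (8 * q + 3 : ℕ) / 4⌉ = k + 2 * q + 1 := by
    rw [Int.ceil_eq_iff]; push_cast; constructor <;> linarith
  rw [hDx, hc₁, hc₂, hc₃, hc₄]
  unfold fengRaoValue
  refine ⟨?_, ?_, ?_, ?_, ?_, ?_⟩ <;> intro h <;> split_ifs <;> omega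

/-- The Feng–Rao designed minimum distance `d_ORD(C_ℓ(P_∞))` for `ρ_{ℓ+1} = (1,2,k)`,
`k < m`, on `GGS(2,n)`. -/
theorem stmt_6 (n m : ℕ) (hn : 5 ≤ n) (hodd : Odd n) (hm : 3 * m = 2 ^ n + 1)
    (H : Set ℕ)
    (hH : H = {x | ∃ i ≤ 1, ∃ j ≤ 3, ∃ k : ℕ, x = i * (2 ^ n + 1) + 2 * j * m + 8 * k})
    (ν : ℕ → ℕ)
    (hν : ∀ x, ν x = {p : ℕ × ℕ | p.1 ∈ H ∧ p.2 ∈ H ∧ p.1 + p.2 = x}.ncard)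
    (D : ℕ → ℕ)
    (hD : ∀ x, D x = sInf (ν '' {y : ℕ | y ∈ H ∧ x ≤ y}))
    (k : ℕ) (hk : k < m) :
    (k = 0 → D (7 * m + 8 * k) = 6) ∧
    (1 ≤ k ∧ k ≤ m / 4 → D (7 * m + 8 * k) = 8) ∧
    (⌈(m : ℚ) / 4⌉ ≤ (k : ℤ) ∧ k ≤ m / 2 - 2 →
      (D (7 * m + 8 * k) : ℤ) = 8 * (⌈(k : ℚ) - m / 4⌉ + 1)) ∧
    (m / 2 - 1 ≤ k ∧ k ≤ 3 * m / 4 - 2 →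
      (D (7 * m + 8 * k) : ℤ)
        = 2 * (⌈(k : ℚ) + m / 2⌉ + 1) + 6 * (⌈(k : ℚ) + m / 2⌉ - m + 1)) ∧
    (3 * m / 4 - 1 ≤ k ∧ k ≤ m - 2 →
      (D (7 * m + 8 * k) : ℤ)
        = 4 * (⌈(k : ℚ) + m / 4⌉ + 1) + 4 * (⌈(k : ℚ) + m / 4⌉ - m + 1)) ∧
    (k = m - 1 → D (7 * m + 8 * k) = 6 * m) :=
  stmt_6_general n m hn hm H hH ν hν D hD k hk
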